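/- arXiv:1309.6748 — 4 statements merged into one kernel-verified Lean document; each statement's English description precedes it below -/
import Mathlib

section
/- For K ≥ 1 and z, w in the closed unit disk, the radial stretching ρ(z) = z|z|^{1/K-1} satisfies |ρ(z) - ρ(w)| ≤ 2^{1-1/K} |z - w|^{1/K}. -/
open Complex

/-- The radial stretching `ρ(z) = z |z|^{1/K - 1}`. -/
noncomputable def radialStretching (K : ℝ) (z : ℂ) : ℂ :=
  z * ((‖z‖ ^ (1 / K - 1) : ℝ) : ℂ)

/-!
Write `p = 1/K`, so that `ρ(z) = |z|^{p-1} z` in any real inner product space. This map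
preserves angles and sends a norm `r` to `r^p`. If `c` is the cosine of the angle between `z` and
`w`, `r = |z|`, `s = |w|` and `t = (1 + c)/2`, the law of cosines gives
`|z - w|² = t (r - s)² + (1 - t) (r + s)²` and
`|ρz - ρw|² = t (r^p - s^p)² + (1 - t) (r^p + s^p)²`.
Termwise, `|r^p - s^p| ≤ |r - s|^p` and `r^p + s^p ≤ 2^{1-p} (r + s)^p`, and concavity of
`x ↦ x^p` moves the convex combination inside the power.
-/

open InnerProductGeometry

namespace Real

lemma abs_rpow_sub_rpow_le {a b p : ℝ} (ha : 0 ≤ a) (hb : 0 ≤ b) (hp₀ : 0 ≤ p)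
    (hp₁ : p ≤ 1) : |a ^ p - b ^ p| ≤ |a - b| ^ p := by
  wlog hba : b ≤ a generalizing a b
  · rw [abs_sub_comm, abs_sub_comm a]
    exact this hb ha (le_of_not_ge hba)
  rw [abs_of_nonneg (sub_nonneg.2 (rpow_le_rpow hb hba hp₀)), abs_of_nonneg (sub_nonneg.2 hba)]
  have := rpow_add_le_add_rpow (sub_nonneg.2 hba) hb hp₀ hp₁
  rw [sub_add_cancel] at this
  linarith

lemma rpow_add_rpow_le_two_rpow_mul {a b p : ℝ} (ha : 0 ≤ a) (hb : 0 ≤ b) (hp₀ : 0 ≤ p)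
    (hp₁ : p ≤ 1) : a ^ p + b ^ p ≤ 2 ^ (1 - p) * (a + b) ^ p := by
  have hmid := (concaveOn_rpow hp₀ hp₁).2 (Set.mem_Ici.2 ha) (Set.mem_Ici.2 hb)
    (by norm_num : (0 : ℝ) ≤ 1 / 2) (by norm_num : (0 : ℝ) ≤ 1 / 2) (by norm_num)
  simp only [smul_eq_mul] at hmid
  rw [← mul_add, ← mul_add,
    mul_rpow (by norm_num) (by positivity), one_div, inv_rpow zero_le_two] at hmid
  calc a ^ p + b ^ p = 2 * (2⁻¹ * (a ^ p + b ^ p)) := by ring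
    _ ≤ 2 * ((2 ^ p)⁻¹ * (a + b) ^ p) := by gcongr
    _ = 2 ^ (1 - p) * (a + b) ^ p := by rw [rpow_sub two_pos, rpow_one]; ring

lemma mul_self_add_mul_self_sub_rpow_le {a b c p : ℝ} (ha : 0 ≤ a) (hb : 0 ≤ b)
    (hc : |c| ≤ 1) (hp₀ : 0 ≤ p) (hp₁ : p ≤ 1) :
    a ^ p * a ^ p + b ^ p * b ^ p - 2 * a ^ p * b ^ p * c ≤
      2 ^ (1 - p) * 2 ^ (1 - p) * (a * a + b * b - 2 * a * b * c) ^ p := by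
  set C : ℝ := 2 ^ (1 - p)
  have hC : 1 ≤ C := one_le_rpow one_le_two (by linarith)
  obtain ⟨hc₁, hc₂⟩ := abs_le.1 hc
  -- with `c = 2t - 1`, `a² + b² - 2abc` is the convex combination `t (a-b)² + (1-t) (a+b)²`
  obtain ⟨t, rfl⟩ : ∃ t, c = 2 * t - 1 := ⟨(1 + c) / 2, by ring⟩
  have hdiff : (a ^ p - b ^ p) * (a ^ p - b ^ p) ≤ C * C * ((a - b) * (a - b)) ^ p :=
    calc (a ^ p - b ^ p) * (a ^ p - b ^ p) = |a ^ p - b ^ p| * |a ^ p - b ^ p| :=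
          (abs_mul_abs_self _).symm
      _ ≤ |a - b| ^ p * |a - b| ^ p :=
          mul_self_le_mul_self (abs_nonneg _) (abs_rpow_sub_rpow_le ha hb hp₀ hp₁)
      _ = ((a - b) * (a - b)) ^ p := by
          rw [← mul_rpow (abs_nonneg _) (abs_nonneg _), abs_mul_abs_self]
      _ ≤ C * C * ((a - b) * (a - b)) ^ p :=
          le_mul_of_one_le_left (rpow_nonneg (mul_self_nonneg _) _)
            (one_le_mul_of_one_le_of_one_le hC hC)
  have hsum : (a ^ p + b ^ p) * (a ^ p + b ^ p) ≤ C * C * ((a + b) * (a + b)) ^ p :=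
    calc (a ^ p + b ^ p) * (a ^ p + b ^ p) ≤ (C * (a + b) ^ p) * (C * (a + b) ^ p) :=
          mul_self_le_mul_self (by positivity) (rpow_add_rpow_le_two_rpow_mul ha hb hp₀ hp₁)
      _ = C * C * ((a + b) * (a + b)) ^ p := by
          rw [mul_rpow (by positivity) (by positivity)]
          ring
  have hconc := (concaveOn_rpow hp₀ hp₁).2 (Set.mem_Ici.2 (mul_self_nonneg (a - b)))
    (Set.mem_Ici.2 (mul_self_nonneg (a + b))) (show 0 ≤ t by linarith)
    (show 0 ≤ 1 - t by linarith) (add_sub_cancel _ _)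
  simp only [smul_eq_mul] at hconc
  calc a ^ p * a ^ p + b ^ p * b ^ p - 2 * a ^ p * b ^ p * (2 * t - 1)
      = t * ((a ^ p - b ^ p) * (a ^ p - b ^ p))
          + (1 - t) * ((a ^ p + b ^ p) * (a ^ p + b ^ p)) := by ring
    _ ≤ t * (C * C * ((a - b) * (a - b)) ^ p)
          + (1 - t) * (C * C * ((a + b) * (a + b)) ^ p) := by gcongr <;> linarith
    _ = C * C * (t * ((a - b) * (a - b)) ^ p + (1 - t) * ((a + b) * (a + b)) ^ p) := by ring
    _ ≤ C * C * (t * ((a - b) * (a - b)) + (1 - t) * ((a + b) * (a + b))) ^ p := by gcongr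
    _ = C * C * (a * a + b * b - 2 * a * b * (2 * t - 1)) ^ p := by ring_nf

end Real

section RadialPower

variable {V : Type*} [NormedAddCommGroup V] [InnerProductSpace ℝ V]

noncomputable def radialPower (p : ℝ) (x : V) : V := ‖x‖ ^ (p - 1) • x

lemma norm_radialPower {p : ℝ} (hp : p ≠ 0) (x : V) : ‖radialPower p x‖ = ‖x‖ ^ p := by
  rw [radialPower, norm_smul, Real.norm_of_nonneg (by positivity),
    ← Real.rpow_add_one' (norm_nonneg x) (by simpa), sub_add_cancel]

lemma angle_radialPower (p : ℝ) (x y : V) :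
    angle (radialPower p x) (radialPower p y) = angle x y := by
  rcases eq_or_ne x 0 with rfl | hx
  · simp [radialPower]
  rcases eq_or_ne y 0 with rfl | hy
  · simp [radialPower]
  rw [radialPower, radialPower, angle_smul_left_of_pos _ _ (by positivity),
    angle_smul_right_of_pos _ _ (by positivity)]

lemma norm_radialPower_sub_le {p : ℝ} (hp₀ : 0 < p) (hp₁ : p ≤ 1) (x y : V) :
    ‖radialPower p x - radialPower p y‖ ≤ 2 ^ (1 - p) * ‖x - y‖ ^ p := by
  rw [mul_self_le_mul_self_iff (norm_nonneg _) (by positivity),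
    norm_sub_sq_eq_norm_sq_add_norm_sq_sub_two_mul_norm_mul_norm_mul_cos_angle,
    norm_radialPower hp₀.ne', norm_radialPower hp₀.ne', angle_radialPower]
  calc _ ≤ 2 ^ (1 - p) * 2 ^ (1 - p) * (‖x - y‖ * ‖x - y‖) ^ p := by
        rw [norm_sub_sq_eq_norm_sq_add_norm_sq_sub_two_mul_norm_mul_norm_mul_cos_angle]
        exact Real.mul_self_add_mul_self_sub_rpow_le (norm_nonneg x) (norm_nonneg y)
          (Real.abs_cos_le_one _) hp₀.le hp₁
    _ = 2 ^ (1 - p) * ‖x - y‖ ^ p * (2 ^ (1 - p) * ‖x - y‖ ^ p) := by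
        rw [Real.mul_rpow (norm_nonneg _) (norm_nonneg _)]
        ring

end RadialPower

lemma radialStretching_eq_radialPower (K : ℝ) : radialStretching K = radialPower (1 / K) := by
  ext z
  rw [radialStretching, radialPower, real_smul, mul_comm]

theorem radialStretching_holder_general (K : ℝ) (hK : 1 ≤ K)
    (z w : ℂ) :
    ‖radialStretching K z - radialStretching K w‖ ≤
      2 ^ (1 - 1 / K) * ‖z - w‖ ^ (1 / K) := by
  rw [radialStretching_eq_radialPower]
  exact norm_radialPower_sub_le (by positivity) (div_le_one_of_le₀ hK (zero_le_one.trans hK)) z w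

theorem radialStretching_holder (K : ℝ) (hK : 1 ≤ K)
    (z w : ℂ) (hz : z ∈ Metric.closedBall (0 : ℂ) 1) (hw : w ∈ Metric.closedBall (0 : ℂ) 1) :
    ‖radialStretching K z - radialStretching K w‖ ≤
      2 ^ (1 - 1 / K) * ‖z - w‖ ^ (1 / K) :=
  radialStretching_holder_general K hK z w
end

section
/- For any K ≥ 1 and any C < 4^{1-1/K} there exist, for all sufficiently large R > 1, points z, w in the unit disk with |z - w| = 4R/(R²+1) ≤ 1 such that the ratio (4R^{1/K}/(R^{2/K}+1)) / (4R/(R²+1))^{1/K} exceeds C/4^{1-1/K}; in particular, 4R^{1/K}/(R^{2/K}+1) > C·(4R/(R²+1))^{1/K} for large R. -/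
/-!
The chord `4R/(R²+1)` is at most `4/R`, so its `1/K`-th power is at most `4^{1/K}/R^{1/K}`, while
the image chord `4R^{1/K}/(R^{2/K}+1)` equals `(4/R^{1/K}) · t/(t+1)` with `t = R^{2/K}`. Hence the
distortion ratio is at least `4^{1-1/K} · t/(t+1)`, which tends to `4^{1-1/K}` as `R → ∞` and so
eventually exceeds any constant below it.
-/

open Complex Filter Topology

lemma four_mul_div_sq_add_one_lt_one {R : ℝ} (hR : 4 ≤ R) : 4 * R / (R ^ 2 + 1) < 1 := by
  rw [div_lt_one (by positivity)]
  nlinarith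

lemma four_mul_div_sq_add_one_le_four_div {R : ℝ} (hR : 0 < R) :
    4 * R / (R ^ 2 + 1) ≤ 4 / R := by
  rw [div_le_div_iff₀ (by positivity) hR]
  nlinarith

lemma exists_norm_lt_one_norm_sub_eq {d : ℝ} (h0 : 0 ≤ d) (h1 : d < 1) :
    ∃ z w : ℂ, ‖z‖ < 1 ∧ ‖w‖ < 1 ∧ ‖z - w‖ = d :=
  ⟨d, 0, by simpa [abs_of_nonneg h0] using h1, by simp, by simp [abs_of_nonneg h0]⟩

lemma tendsto_div_add_one_atTop : Tendsto (fun t : ℝ => t / (t + 1)) atTop (𝓝 1) := by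
  have h : Tendsto (fun t : ℝ => 1 - (t + 1)⁻¹) atTop (𝓝 (1 - 0)) :=
    (tendsto_inv_atTop_zero.comp (tendsto_atTop_add_const_right _ 1 tendsto_id)).const_sub 1
  rw [sub_zero] at h
  refine h.congr' ?_
  filter_upwards [eventually_gt_atTop 0] with t ht
  field_simp
  ring

lemma four_rpow_mul_le_chord_ratio {K R : ℝ} (hK : 0 < K) (hR : 0 < R) :
    4 ^ (1 - 1 / K) * (R ^ (2 / K) / (R ^ (2 / K) + 1)) ≤
      (4 * R ^ (1 / K) / (R ^ (2 / K) + 1)) / (4 * R / (R ^ 2 + 1)) ^ (1 / K) := by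
  have hsq : R ^ (1 / K) * R ^ (1 / K) = R ^ (2 / K) := by
    rw [← Real.rpow_add hR]
    ring_nf
  have hchord : (4 * R / (R ^ 2 + 1)) ^ (1 / K) ≤ 4 ^ (1 / K) / R ^ (1 / K) := by
    rw [← Real.div_rpow (by norm_num) hR.le]
    exact Real.rpow_le_rpow (by positivity) (four_mul_div_sq_add_one_le_four_div hR)
      (by positivity)
  have hs : 0 < R ^ (1 / K) := Real.rpow_pos_of_pos hR _
  calc 4 ^ (1 - 1 / K) * (R ^ (2 / K) / (R ^ (2 / K) + 1))
      = (4 * R ^ (1 / K) / (R ^ (2 / K) + 1)) / (4 ^ (1 / K) / R ^ (1 / K)) := by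
        rw [Real.rpow_sub (by norm_num), Real.rpow_one, ← hsq]
        field_simp
    _ ≤ _ := by gcongr

theorem sharpness_ratio_exceeds (K C : ℝ) (hK : 1 ≤ K) (hC : C < 4 ^ (1 - 1 / K)) :
    ∃ R₀ : ℝ, 1 < R₀ ∧ ∀ R : ℝ, R₀ ≤ R →
      (∃ z w : ℂ, ‖z‖ < 1 ∧ ‖w‖ < 1 ∧
        ‖z - w‖ = 4 * R / (R ^ 2 + 1)) ∧
      4 * R / (R ^ 2 + 1) ≤ 1 ∧
      (4 * R ^ (1 / K) / (R ^ (2 / K) + 1)) / (4 * R / (R ^ 2 + 1)) ^ (1 / K) >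
        C / 4 ^ (1 - 1 / K) ∧
      4 * R ^ (1 / K) / (R ^ (2 / K) + 1) > C * (4 * R / (R ^ 2 + 1)) ^ (1 / K) := by
  have hK0 : 0 < K := by linarith
  set A : ℝ := 4 ^ (1 - 1 / K)
  have hA : 1 ≤ A := Real.one_le_rpow (by norm_num) (sub_nonneg.2 ((div_le_one hK0).2 hK))
  have hCA : C / A < A := (div_lt_iff₀ (by linarith)).2 (hC.trans_le (le_mul_of_one_le_left
    (by linarith) hA))
  have hlim : Tendsto (fun R : ℝ => A * (R ^ (2 / K) / (R ^ (2 / K) + 1))) atTop (𝓝 A) := by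
    simpa using (tendsto_div_add_one_atTop.comp (tendsto_rpow_atTop (by positivity))).const_mul A
  obtain ⟨R₀, hR₀⟩ := eventually_atTop.1
    ((hlim.eventually (lt_mem_nhds hC)).and (hlim.eventually (lt_mem_nhds hCA)))
  refine ⟨max R₀ 4, by simp, fun R hR => ?_⟩
  obtain ⟨hRC, hRCA⟩ := hR₀ R (le_of_max_le_left hR)
  have hR4 : 4 ≤ R := le_of_max_le_right hR
  have hchord := four_mul_div_sq_add_one_lt_one hR4
  have hbound := four_rpow_mul_le_chord_ratio hK0 (by linarith : 0 < R)
  refine ⟨exists_norm_lt_one_norm_sub_eq (by positivity) hchord, hchord.le,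
    hRCA.trans_le hbound, ?_⟩
  exact (lt_div_iff₀ (by positivity)).1 (hRC.trans_le hbound)
end

section
/- Let R > 1, K ≥ 1, and define g = φ ∘ ρ ∘ φ⁻¹ on E_R \ [-2,2], where φ(z) = z + 1/z maps A_R = {1 < |z| < R} conformally onto E_R \ [-2,2] and ρ(z) = z|z|^{1/K-1}. Then g extends continuously across the slit [-2,2] to a homeomorphism of the closed ellipse Ē_R onto Ē_{R^{1/K}} fixing ±2, with g(x) = x for x ∈ [-2,2]. -/
/-!
The focal sum of the Joukowski image of `w ≠ 0` is
`‖φ w - 2‖ + ‖φ w + 2‖ = 2 (‖w‖ + ‖w‖⁻¹)` (parallelogram law), and `t ↦ t + t⁻¹` increases on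
`[1, ∞)`. Since every point has a `φ`-preimage of norm `≥ 1` and the slit is the degenerate ellipse
of focal sum `4` (equality in the triangle inequality), `φ` maps the closed annulus
`1 ≤ ‖w‖ ≤ R` onto `Ē_R`, injectively except that `w` and `w⁻¹ = conj w` on the unit circle both
go to the same slit point. The stretching `ρ` maps that annulus onto the one of radius `R ^ (1/K)`
and fixes the unit circle, so `φ ∘ ρ` descends to a well-defined injective map on `Ē_R` that fixes
the slit pointwise; it is continuous because `φ` restricted to the compact annulus is a quotient
map.
-/

open Complex

/-- The Joukowski map. -/
noncomputable def joukowski (z : ℂ) : ℂ := z + z⁻¹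

/-- The open ellipse with foci `±2` and semi-axis sum `2 (R + 1/R)`. -/
def openEllipse (R : ℝ) : Set ℂ :=
  {z : ℂ | ‖z - 2‖ + ‖z + 2‖ < 2 * (R + 1 / R)}

/-- The closed ellipse with foci `±2`. -/
def closedEllipse (R : ℝ) : Set ℂ :=
  {z : ℂ | ‖z - 2‖ + ‖z + 2‖ ≤ 2 * (R + 1 / R)}

/-- The round annulus `{1 < |z| < R}`. -/
def annulus (R : ℝ) : Set ℂ := {z : ℂ | 1 < ‖z‖ ∧ ‖z‖ < R}

open Set

lemma joukowski_inv (w : ℂ) : joukowski w⁻¹ = joukowski w := by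
  rw [joukowski, joukowski, inv_inv, add_comm]

lemma norm_joukowski_sub_two_add_norm_joukowski_add_two {w : ℂ} (hw : w ≠ 0) :
    ‖joukowski w - 2‖ + ‖joukowski w + 2‖ = 2 * (‖w‖ + ‖w‖⁻¹) := by
  have hsub : joukowski w - 2 = (w - 1) ^ 2 * w⁻¹ := by
    rw [joukowski]; field_simp; ring
  have hadd : joukowski w + 2 = (w + 1) ^ 2 * w⁻¹ := by
    rw [joukowski]; field_simp; ring
  have hpar := parallelogram_law_with_norm ℝ w 1
  have hw' : 0 < ‖w‖ := norm_pos_iff.mpr hw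
  rw [hsub, hadd, norm_mul, norm_mul, norm_inv, norm_pow, norm_pow]
  rw [norm_one] at hpar
  field_simp
  nlinarith [hpar]

lemma strictMonoOn_add_inv : StrictMonoOn (fun t : ℝ => t + t⁻¹) (Ici 1) := by
  intro a (ha : 1 ≤ a) b (hb : 1 ≤ b) hab
  have key : b + b⁻¹ - (a + a⁻¹) = (b - a) * (a * b - 1) / (a * b) := by
    field_simp; ring
  have : 0 < (b - a) * (a * b - 1) / (a * b) := by
    apply div_pos (mul_pos _ _) <;> nlinarith
  show a + a⁻¹ < b + b⁻¹
  linarith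

lemma mem_segment_iff_norm_sub_two_add_norm_add_two (z : ℂ) :
    z ∈ segment ℝ (-2 : ℂ) 2 ↔ ‖z - 2‖ + ‖z + 2‖ = 4 := by
  rw [mem_segment_iff_wbtw, ← dist_add_dist_eq_iff, dist_eq_norm, dist_eq_norm, dist_eq_norm,
    ← norm_neg (-2 - z)]
  norm_num [add_comm (‖z + 2‖)]

lemma eq_or_norm_eq_one_of_joukowski_eq {a b : ℂ} (ha : 1 ≤ ‖a‖) (hb : 1 ≤ ‖b‖)
    (h : joukowski a = joukowski b) : a = b ∨ ‖a‖ = 1 ∧ ‖b‖ = 1 := by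
  have ha0 : a ≠ 0 := norm_pos_iff.mp (by linarith)
  have hb0 : b ≠ 0 := norm_pos_iff.mp (by linarith)
  have hfac : (a - b) * (a * b - 1) = 0 := by
    rw [joukowski, joukowski] at h
    field_simp at h
    linear_combination h
  rcases mul_eq_zero.mp hfac with h | h
  · exact .inl (sub_eq_zero.mp h)
  · have : ‖a‖ * ‖b‖ = 1 := by rw [← norm_mul, sub_eq_zero.mp h, norm_one]
    exact .inr ⟨by nlinarith, by nlinarith⟩

lemma exists_one_le_norm_joukowski_eq (z : ℂ) : ∃ w : ℂ, 1 ≤ ‖w‖ ∧ joukowski w = z := by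
  obtain ⟨w, hw⟩ := exists_quadratic_eq_zero one_ne_zero
    (IsAlgClosed.exists_eq_mul_self (discrim 1 (-z) 1))
  have hw0 : w ≠ 0 := by rintro rfl; simp at hw
  have hjw : joukowski w = z := by
    rw [joukowski]; field_simp; linear_combination hw
  rcases le_or_gt 1 ‖w‖ with h | h
  · exact ⟨w, h, hjw⟩
  · refine ⟨w⁻¹, ?_, by rw [joukowski_inv, hjw]⟩
    rw [norm_inv]
    exact (one_lt_inv₀ (norm_pos_iff.mpr hw0)).mpr h |>.le

lemma joukowski_mem_closedEllipse_iff {R : ℝ} {w : ℂ} (hR : 1 ≤ R) (hw : 1 ≤ ‖w‖) :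
    joukowski w ∈ closedEllipse R ↔ ‖w‖ ≤ R := by
  rw [closedEllipse, mem_ofPred_eq,
    norm_joukowski_sub_two_add_norm_joukowski_add_two (norm_pos_iff.mp (by linarith)), one_div,
    mul_le_mul_iff_right₀ two_pos]
  exact strictMonoOn_add_inv.le_iff_le hw hR

lemma joukowski_mem_openEllipse_iff {R : ℝ} {w : ℂ} (hR : 1 ≤ R) (hw : 1 ≤ ‖w‖) :
    joukowski w ∈ openEllipse R ↔ ‖w‖ < R := by
  rw [openEllipse, mem_ofPred_eq,
    norm_joukowski_sub_two_add_norm_joukowski_add_two (norm_pos_iff.mp (by linarith)), one_div,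
    mul_lt_mul_iff_right₀ two_pos]
  exact strictMonoOn_add_inv.lt_iff_lt hw hR

lemma joukowski_mem_segment_iff {w : ℂ} (hw : 1 ≤ ‖w‖) :
    joukowski w ∈ segment ℝ (-2 : ℂ) 2 ↔ ‖w‖ = 1 := by
  rw [mem_segment_iff_norm_sub_two_add_norm_add_two,
    norm_joukowski_sub_two_add_norm_joukowski_add_two (norm_pos_iff.mp (by linarith)),
    show (4 : ℝ) = 2 * (1 + 1⁻¹) by norm_num, mul_right_inj' two_ne_zero]
  exact strictMonoOn_add_inv.injOn.eq_iff hw self_mem_Ici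

def closedAnnulus (R : ℝ) : Set ℂ := {w : ℂ | 1 ≤ ‖w‖ ∧ ‖w‖ ≤ R}

lemma isCompact_closedAnnulus (R : ℝ) : IsCompact (closedAnnulus R) :=
  Metric.isCompact_of_isClosed_isBounded
    ((isClosed_le continuous_const continuous_norm).inter
      (isClosed_le continuous_norm continuous_const))
    ((Metric.isBounded_closedBall (x := 0) (r := R)).subset fun _ hw => by
      simpa using hw.2)

lemma image_joukowski_closedAnnulus {R : ℝ} (hR : 1 ≤ R) :
    joukowski '' closedAnnulus R = closedEllipse R := by
  ext z
  constructor
  · rintro ⟨w, ⟨hw, hwR⟩, rfl⟩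
    exact (joukowski_mem_closedEllipse_iff hR hw).mpr hwR
  · intro hz
    obtain ⟨w, hw, rfl⟩ := exists_one_le_norm_joukowski_eq z
    exact ⟨w, ⟨hw, (joukowski_mem_closedEllipse_iff hR hw).mp hz⟩, rfl⟩

lemma norm_radialStretching {K : ℝ} (hK : K ≠ 0) (w : ℂ) :
    ‖radialStretching K w‖ = ‖w‖ ^ (1 / K) := by
  rcases eq_or_ne w 0 with rfl | hw
  · simp [radialStretching, Real.zero_rpow (inv_ne_zero hK)]
  have hw' : 0 < ‖w‖ := norm_pos_iff.mpr hw
  rw [radialStretching, norm_mul, Complex.norm_real, Real.norm_of_nonneg (by positivity),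
    ← Real.rpow_one_add' hw'.le (by simp [hK])]
  ring_nf

lemma radialStretching_of_norm_eq_one (K : ℝ) {w : ℂ} (hw : ‖w‖ = 1) :
    radialStretching K w = w := by
  simp [radialStretching, hw]

lemma leftInverse_radialStretching_inv {K : ℝ} (hK : K ≠ 0) :
    Function.LeftInverse (radialStretching K⁻¹) (radialStretching K) := by
  intro w
  rcases eq_or_ne w 0 with rfl | hw
  · simp [radialStretching]
  have hw' : 0 < ‖w‖ := norm_pos_iff.mpr hw
  have hexp : 1 / K - 1 + 1 / K * (1 / K⁻¹ - 1) = 0 := by field_simp; ring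
  rw [radialStretching, norm_radialStretching hK, radialStretching, mul_assoc, ← Complex.ofReal_mul,
    ← Real.rpow_mul hw'.le, ← Real.rpow_add hw', hexp, Real.rpow_zero, Complex.ofReal_one, mul_one]

lemma image_radialStretching_closedAnnulus {K R : ℝ} (hK : 0 < K) (hR : 0 ≤ R) :
    radialStretching K '' closedAnnulus R = closedAnnulus (R ^ (1 / K)) := by
  have hK' : K⁻¹ ≠ 0 := inv_ne_zero hK.ne'
  rw [image_eq_preimage_of_inverse (leftInverse_radialStretching_inv hK.ne')
    (fun w => by simpa using leftInverse_radialStretching_inv hK' w)]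
  ext w
  simp only [closedAnnulus, mem_preimage, mem_ofPred_eq, norm_radialStretching hK', one_div,
    inv_inv]
  rw [Real.le_rpow_inv_iff_of_pos (norm_nonneg w) hR hK,
    ← Real.rpow_le_rpow_iff zero_le_one (norm_nonneg w) hK, Real.one_rpow]

lemma radialStretching_ne_zero (K : ℝ) {w : ℂ} (hw : w ≠ 0) : radialStretching K w ≠ 0 :=
  mul_ne_zero hw (Complex.ofReal_ne_zero.mpr (Real.rpow_pos_of_pos (norm_pos_iff.mpr hw) _).ne')

lemma continuousAt_radialStretching (K : ℝ) {w : ℂ} (hw : w ≠ 0) :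
    ContinuousAt (radialStretching K) w := by
  unfold radialStretching
  fun_prop (disch := exact Or.inl (norm_ne_zero_iff.mpr hw))

lemma continuousAt_joukowski {w : ℂ} (hw : w ≠ 0) : ContinuousAt joukowski w := by
  unfold joukowski
  fun_prop (disch := exact hw)

lemma ContinuousOn.image_of_comp {X Y Z : Type*} [TopologicalSpace X] [TopologicalSpace Y]
    [T2Space Y] [TopologicalSpace Z] {f : X → Y} {g : Y → Z} {s : Set X} (hs : IsCompact s)
    (hf : ContinuousOn f s) (hgf : ContinuousOn (g ∘ f) s) : ContinuousOn g (f '' s) := by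
  rw [continuousOn_iff_isClosed] at hgf ⊢
  intro t ht
  obtain ⟨u, hu, hut⟩ := hgf t ht
  have hpre : IsCompact ((g ∘ f) ⁻¹' t ∩ s) := by
    rw [hut]; exact hs.inter_left hu
  refine ⟨f '' ((g ∘ f) ⁻¹' t ∩ s),
    (hpre.image_of_continuousOn (hf.mono inter_subset_right)).isClosed, ?_⟩
  ext y
  constructor
  · rintro ⟨hy, x, hx, rfl⟩
    exact ⟨⟨x, ⟨hy, hx⟩, rfl⟩, x, hx, rfl⟩
  · rintro ⟨⟨x, ⟨hx, hxs⟩, rfl⟩, -⟩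
    exact ⟨hx, x, hxs, rfl⟩

/-- `φ ∘ ρ ∘ φ⁻¹`, computed through an arbitrary preimage of norm `≥ 1`. The choice does not
matter: two such preimages of one point lie on the unit circle, where `ρ` is the identity. -/
noncomputable def ellipseDeformation (K : ℝ) (z : ℂ) : ℂ :=
  joukowski (radialStretching K (Function.invFunOn joukowski {w : ℂ | 1 ≤ ‖w‖} z))

lemma ellipseDeformation_joukowski (K : ℝ) {w : ℂ} (hw : 1 ≤ ‖w‖) :
    ellipseDeformation K (joukowski w) = joukowski (radialStretching K w) := by
  have hex : ∃ a ∈ {w : ℂ | 1 ≤ ‖w‖}, joukowski a = joukowski w := ⟨w, hw, rfl⟩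
  set a := Function.invFunOn joukowski {w : ℂ | 1 ≤ ‖w‖} (joukowski w)
  have ha : 1 ≤ ‖a‖ := Function.invFunOn_mem hex
  have hja : joukowski a = joukowski w := Function.invFunOn_eq hex
  change joukowski (radialStretching K a) = _
  rcases eq_or_norm_eq_one_of_joukowski_eq ha hw hja with h | ⟨ha1, hw1⟩
  · rw [h]
  · rw [radialStretching_of_norm_eq_one K ha1, radialStretching_of_norm_eq_one K hw1, hja]

lemma ellipseDeformation_of_mem_segment (K : ℝ) {z : ℂ} (hz : z ∈ segment ℝ (-2 : ℂ) 2) :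
    ellipseDeformation K z = z := by
  obtain ⟨w, hw, rfl⟩ := exists_one_le_norm_joukowski_eq z
  rw [ellipseDeformation_joukowski K hw,
    radialStretching_of_norm_eq_one K ((joukowski_mem_segment_iff hw).mp hz)]

lemma ellipseDeformation_eq_of_mem_openEllipse_diff_segment (K : ℝ) {R : ℝ} {z : ℂ} (hR : 1 ≤ R)
    (hz : z ∈ openEllipse R \ segment ℝ (-2 : ℂ) 2) :
    ellipseDeformation K z =
      joukowski (radialStretching K (Function.invFunOn joukowski (annulus R) z)) := by
  obtain ⟨w, hw, rfl⟩ := exists_one_le_norm_joukowski_eq z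
  have hw1 : 1 < ‖w‖ := hw.lt_of_ne fun h => hz.2 ((joukowski_mem_segment_iff hw).mpr h.symm)
  have hex : ∃ a ∈ annulus R, joukowski a = joukowski w :=
    ⟨w, ⟨hw1, (joukowski_mem_openEllipse_iff hR hw).mp hz.1⟩, rfl⟩
  have ha : Function.invFunOn joukowski (annulus R) (joukowski w) ∈ annulus R :=
    Function.invFunOn_mem hex
  rw [← Function.invFunOn_eq hex, ellipseDeformation_joukowski K ha.1.le, Function.invFunOn_eq hex]

lemma ellipseDeformation_injective {K : ℝ} (hK : 0 < K) :
    Function.Injective (ellipseDeformation K) := by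
  intro z₁ z₂ h
  obtain ⟨a, ha, rfl⟩ := exists_one_le_norm_joukowski_eq z₁
  obtain ⟨b, hb, rfl⟩ := exists_one_le_norm_joukowski_eq z₂
  rw [ellipseDeformation_joukowski K ha, ellipseDeformation_joukowski K hb] at h
  have hρ {w : ℂ} (hw : 1 ≤ ‖w‖) : 1 ≤ ‖radialStretching K w‖ := by
    rw [norm_radialStretching hK.ne']
    exact Real.one_le_rpow hw (by positivity)
  have hρ_eq_one {w : ℂ} (hw : ‖radialStretching K w‖ = 1) : ‖w‖ = 1 := by
    rw [norm_radialStretching hK.ne', one_div] at hw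
    rw [← Real.rpow_inv_rpow (norm_nonneg w) hK.ne', hw, Real.one_rpow]
  rcases eq_or_norm_eq_one_of_joukowski_eq (hρ ha) (hρ hb) h with h | ⟨ha1, hb1⟩
  · rw [(leftInverse_radialStretching_inv hK.ne').injective h]
  · rwa [radialStretching_of_norm_eq_one K (hρ_eq_one ha1),
      radialStretching_of_norm_eq_one K (hρ_eq_one hb1)] at h

lemma image_ellipseDeformation_closedEllipse {K R : ℝ} (hK : 0 < K) (hR : 1 ≤ R) :
    ellipseDeformation K '' closedEllipse R = closedEllipse (R ^ (1 / K)) := by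
  rw [← image_joukowski_closedAnnulus hR, ← image_comp,
    image_congr (f := ellipseDeformation K ∘ joukowski) (g := joukowski ∘ radialStretching K)
      fun w hw => ellipseDeformation_joukowski K hw.1, image_comp,
    image_radialStretching_closedAnnulus hK (by linarith),
    image_joukowski_closedAnnulus (Real.one_le_rpow hR (by positivity))]

lemma continuousOn_ellipseDeformation (K : ℝ) {R : ℝ} (hR : 1 ≤ R) :
    ContinuousOn (ellipseDeformation K) (closedEllipse R) := by
  have hne {w : ℂ} (hw : w ∈ closedAnnulus R) : w ≠ 0 := norm_pos_iff.mp (by linarith [hw.1])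
  rw [← image_joukowski_closedAnnulus hR]
  refine .image_of_comp (isCompact_closedAnnulus R)
    (fun w hw => (continuousAt_joukowski (hne hw)).continuousWithinAt) ?_
  refine ContinuousOn.congr (f := joukowski ∘ radialStretching K) (fun w hw => ?_)
    fun w hw => ellipseDeformation_joukowski K hw.1
  exact ((continuousAt_joukowski (radialStretching_ne_zero K (hne hw))).comp
    (continuousAt_radialStretching K (hne hw))).continuousWithinAt

theorem ellipse_deformation_extends (R K : ℝ) (hR : 1 < R) (hK : 1 ≤ K) :
    ∃ G : ℂ → ℂ,
      (∀ z ∈ openEllipse R \ segment ℝ (-2 : ℂ) 2,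
        G z = joukowski (radialStretching K (Function.invFunOn joukowski (annulus R) z))) ∧
      ContinuousOn G (closedEllipse R) ∧
      Set.BijOn G (closedEllipse R) (closedEllipse (R ^ (1 / K))) ∧
      G 2 = 2 ∧ G (-2) = -2 ∧
      (∀ x ∈ segment ℝ (-2 : ℂ) 2, G x = x) := by
  have hK₀ : 0 < K := by linarith
  refine ⟨ellipseDeformation K,
    fun z hz => ellipseDeformation_eq_of_mem_openEllipse_diff_segment K hR.le hz,
    continuousOn_ellipseDeformation K hR.le, ?_,
    ellipseDeformation_of_mem_segment K (right_mem_segment ℝ _ _),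
    ellipseDeformation_of_mem_segment K (left_mem_segment ℝ _ _),
    fun x hx => ellipseDeformation_of_mem_segment K hx⟩
  rw [← image_ellipseDeformation_closedEllipse hK₀ hR.le]
  exact (ellipseDeformation_injective hK₀).injOn.bijOn_image
end

section
/- Fix K ≥ 1. There is no constant C < 4^{1-1/K} such that for all pairs of positive reals (a, b) with a = 4/(R^{1/K}+R^{-1/K}) and b = 4/(R+1/R) for some R > 1, one has a ≤ C·b^{1/K}. -/
/-!
Write `g x = (x + x⁻¹) / x`, so that `x + x⁻¹ = x * g x` and `g x → 1` as `x → ∞`.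
With `p = 1 / K`, the quotient `a / b ^ p` of the two segment lengths equals
`4 ^ (1 - p) * g R ^ p / g (R ^ p)`, since the powers of `R` cancel. Letting `R → ∞` it tends to
`4 ^ (1 - p)`, so any admissible constant is at least `4 ^ (1 - p)`.
-/

open Filter Real Topology

lemma tendsto_add_inv_div_self_atTop :
    Tendsto (fun x : ℝ => (x + x⁻¹) / x) atTop (𝓝 1) := by
  have hsq : Tendsto (fun x : ℝ => 1 + x⁻¹ * x⁻¹) atTop (𝓝 (1 + 0 * 0)) :=
    tendsto_const_nhds.add (tendsto_inv_atTop_zero.mul tendsto_inv_atTop_zero)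
  rw [zero_mul, add_zero] at hsq
  refine hsq.congr' ?_
  filter_upwards [eventually_ne_atTop 0] with x hx
  field_simp

lemma div_add_rpow_neg_div_rpow_eq {c : ℝ} (hc : 0 < c) (p : ℝ) {R : ℝ} (hR : 0 < R) :
    c / (R ^ p + R ^ (-p)) / (c / (R + 1 / R)) ^ p =
      c ^ (1 - p) * ((R + R⁻¹) / R) ^ p / ((R ^ p + (R ^ p)⁻¹) / R ^ p) := by
  have hRp : 0 < R ^ p := rpow_pos_of_pos hR p
  have hg : 0 < (R + R⁻¹) / R := by positivity
  have hcp : 0 < c ^ p := rpow_pos_of_pos hc p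
  have hsum : R + 1 / R = R * ((R + R⁻¹) / R) := by field_simp
  rw [rpow_neg hR.le, hsum, div_rpow hc.le (by positivity), mul_rpow hR.le hg.le,
    rpow_sub hc, rpow_one]
  have := rpow_pos_of_pos hg p
  field_simp

lemma tendsto_div_add_rpow_neg_div_rpow_atTop {c p : ℝ} (hc : 0 < c) (hp : 0 < p) :
    Tendsto (fun R : ℝ => c / (R ^ p + R ^ (-p)) / (c / (R + 1 / R)) ^ p) atTop
      (𝓝 (c ^ (1 - p))) := by
  have hnum : Tendsto (fun R : ℝ => ((R + R⁻¹) / R) ^ p) atTop (𝓝 1) := by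
    simpa using tendsto_add_inv_div_self_atTop.rpow_const (Or.inr hp.le)
  have hden : Tendsto (fun R : ℝ => (R ^ p + (R ^ p)⁻¹) / R ^ p) atTop (𝓝 1) :=
    tendsto_add_inv_div_self_atTop.comp (tendsto_rpow_atTop hp)
  have hlim := (tendsto_const_nhds (x := c ^ (1 - p)).mul hnum).div hden one_ne_zero
  rw [mul_one, div_one] at hlim
  refine hlim.congr' ?_
  filter_upwards [eventually_gt_atTop 0] with R hR
  exact (div_add_rpow_neg_div_rpow_eq hc p hR).symm

theorem no_smaller_constant (K : ℝ) (hK : 1 ≤ K) :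
    ¬ ∃ C : ℝ, C < 4 ^ (1 - 1 / K) ∧
      ∀ R : ℝ, 1 < R →
        4 / (R ^ (1 / K) + R ^ (-(1 / K))) ≤ C * (4 / (R + 1 / R)) ^ (1 / K) := by
  rintro ⟨C, hC, hbound⟩
  have hp : 0 < 1 / K := by positivity
  have hratio : ∀ᶠ R in atTop,
      4 / (R ^ (1 / K) + R ^ (-(1 / K))) / (4 / (R + 1 / R)) ^ (1 / K) ≤ C := by
    filter_upwards [eventually_gt_atTop 1] with R hR
    have hb : 0 < (4 / (R + 1 / R)) ^ (1 / K) := by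
      have : 0 < R := by linarith
      positivity
    exact (div_le_iff₀ hb).2 (hbound R hR)
  exact hC.not_ge (le_of_tendsto (tendsto_div_add_rpow_neg_div_rpow_atTop four_pos hp) hratio)
end
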